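/- Let sem ⊆ T × ℝ be the concrete resource-usage semantics of a program p, let (G, Φ) be a safe analysis result for p, and let (G_I, Φ_I) be a call-resource pair with input-size set S = { size(t) : t ∈ G_I }, with G_I ⊆ G. If for all n ∈ S one has Φ^u(n) < Φ_I^l(n) or Φ_I^u(n) < Φ^l(n), then for every (t, r) ∈ sem with t ∈ G_I one has r ∉ [Φ_I^l(size(t)), Φ_I^u(size(t))]; in particular, if there exists at least one (t, r) ∈ sem with t ∈ G_I, then p is not partially correct with respect to (G_I, Φ_I). -/
import Mathlib


theorem partial_incorrectness_from_bound_comparison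
    {T : Type*} {k : ℕ}
    (sem : Set (T × ℝ)) (size : T → (Fin k → ℕ))
    (G : Set T) (Φl Φu : (Fin k → ℕ) → ℝ) (hΦ : ∀ n, Φl n ≤ Φu n)
    (GI : Set T) (ΦIl ΦIu : (Fin k → ℕ) → ℝ) (hΦI : ∀ n, ΦIl n ≤ ΦIu n)
    (hsafe : ∀ p ∈ sem, p.1 ∈ G ∧
      Φl (size p.1) ≤ p.2 ∧ p.2 ≤ Φu (size p.1))
    (hG : GI ⊆ G)
    (hcmp : ∀ n ∈ size '' GI, Φu n < ΦIl n ∨ ΦIu n < Φl n) :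
    (∀ p ∈ sem, p.1 ∈ GI →
      p.2 ∉ Set.Icc (ΦIl (size p.1)) (ΦIu (size p.1))) ∧
    ((∃ p ∈ sem, p.1 ∈ GI) →
      ¬ (∀ p ∈ sem, p.1 ∈ GI →
          ΦIl (size p.1) ≤ p.2 ∧ p.2 ≤ ΦIu (size p.1))) := by
  have key : ∀ p ∈ sem, p.1 ∈ GI →
      p.2 ∉ Set.Icc (ΦIl (size p.1)) (ΦIu (size p.1)) := by
    intro p hp hpGI hmem
    obtain ⟨hl, hu⟩ := hmem
    obtain ⟨_, h1, h2⟩ := hsafe p hp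
    rcases hcmp (size p.1) ⟨p.1, hpGI, rfl⟩ with h | h
    · linarith
    · linarith
  refine ⟨key, ?_⟩
  rintro ⟨p, hp, hpGI⟩ hcorr
  exact key p hp hpGI ⟨(hcorr p hp hpGI).1, (hcorr p hp hpGI).2⟩
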